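/- In B_n, for h > i > j > k, the band generator and descending cycle satisfy (i,j) δ_{h,k} = δ_{h,k} (i+1,j+1). -/

import Mathlib

/-- Artin relations for the braid group `B_n`, with generators `σ_1, …, σ_{n-1}`
(indexed by natural numbers; generators with index `0` or `≥ n` are killed). -/
def braidRels (n : ℕ) : Set (FreeGroup ℕ) :=
  {x | (∃ i j : ℕ, 1 ≤ i ∧ i + 2 ≤ j ∧ j + 1 ≤ n ∧
        x = FreeGroup.of i * FreeGroup.of j * (FreeGroup.of i)⁻¹ * (FreeGroup.of j)⁻¹) ∨
      (∃ i : ℕ, 1 ≤ i ∧ i + 2 ≤ n ∧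
        x = FreeGroup.of i * FreeGroup.of (i+1) * FreeGroup.of i *
            (FreeGroup.of (i+1) * FreeGroup.of i * FreeGroup.of (i+1))⁻¹) ∨
      (∃ i : ℕ, (i = 0 ∨ n ≤ i) ∧ x = FreeGroup.of i)}

/-- The braid group `B_n` with the Artin presentation. -/
def BraidGroup (n : ℕ) : Type := PresentedGroup (braidRels n)

instance (n : ℕ) : Group (BraidGroup n) :=
  inferInstanceAs (Group (PresentedGroup (braidRels n)))

/-- The Artin generator `σ_k` of `B_n`. -/
def σb (n k : ℕ) : BraidGroup n := PresentedGroup.of (rels := braidRels n) k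

/-- The product `σ_{i-1} σ_{i-2} ⋯ σ_{j+1}` in `B_n`. -/
def chain (n i j : ℕ) : BraidGroup n :=
  ((List.range' (j+1) (i-1-j)).reverse.map (σb n)).prod

/-- The band generator `(i,j) = (σ_{i-1} ⋯ σ_{j+1}) σ_j (σ_{i-1} ⋯ σ_{j+1})⁻¹` of `B_n`. -/
def band (n i j : ℕ) : BraidGroup n := chain n i j * σb n j * (chain n i j)⁻¹

/-- The descending cycle `δ_{p,q} = (p,p-1)(p-1,p-2)⋯(q+1,q)` in `B_n`. -/
def descCycle (n p q : ℕ) : BraidGroup n :=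
  ((List.range' q (p - q)).reverse.map fun k => band n (k + 1) k).prod

/-!
For `q ≤ p` the descending cycle `δ_{p,q}` is the positive word `σ_{p-1} ⋯ σ_q`, and conjugation
by it shifts generators: `σ_m δ_{p,q} = δ_{p,q} σ_{m+1}` whenever `1 ≤ q ≤ m ≤ p - 2`. This follows by
induction on `p`, from the far commutation relations and, at `p = m + 2`, one braid relation.
The band generator `(i,j)` is a word in `σ_j, …, σ_{i-1}`, so it is shifted to `(i+1,j+1)`.
-/

theorem SemiconjBy.list_prod_map {G ι : Type*} [Monoid G] {a : G} {f g : ι → G} (l : List ι)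
    (h : ∀ x ∈ l, SemiconjBy a (f x) (g x)) :
    SemiconjBy a (l.map f).prod (l.map g).prod := by
  induction l with
  | nil => exact SemiconjBy.one_right a
  | cons x l ih =>
    simp only [List.map_cons, List.prod_cons]
    exact (h x List.mem_cons_self).mul_right (ih fun y hy => h y (List.mem_cons_of_mem x hy))

namespace BraidGroup

variable {n : ℕ}

theorem σb_eq_one {a : ℕ} (h : a = 0 ∨ n ≤ a) : σb n a = 1 :=
  PresentedGroup.one_of_mem (Or.inr (Or.inr ⟨a, h, rfl⟩))

theorem commute_σb {a b : ℕ} (h : a + 2 ≤ b) : Commute (σb n a) (σb n b) := by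
  rcases Nat.eq_zero_or_pos a with ha | ha
  · rw [σb_eq_one (Or.inl ha)]
    exact Commute.one_left _
  rcases le_or_gt n b with hb | hb
  · rw [σb_eq_one (Or.inr hb)]
    exact Commute.one_right _
  have hrel : (PresentedGroup.mk (braidRels n)
      (FreeGroup.of a * FreeGroup.of b * (FreeGroup.of a)⁻¹ * (FreeGroup.of b)⁻¹) :
      BraidGroup n) = 1 :=
    PresentedGroup.one_of_mem (Or.inl ⟨a, b, ha, h, hb, rfl⟩)
  simp only [map_mul, map_inv] at hrel
  exact mul_inv_eq_iff_eq_mul.mp (mul_inv_eq_one.mp hrel)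

theorem σb_braid {a : ℕ} (h1 : 1 ≤ a) (h2 : a + 2 ≤ n) :
    σb n a * σb n (a+1) * σb n a = σb n (a+1) * σb n a * σb n (a+1) := by
  have hrel : (PresentedGroup.mk (braidRels n)
      (FreeGroup.of a * FreeGroup.of (a+1) * FreeGroup.of a *
        (FreeGroup.of (a+1) * FreeGroup.of a * FreeGroup.of (a+1))⁻¹) : BraidGroup n) = 1 :=
    PresentedGroup.one_of_mem (Or.inr (Or.inl ⟨a, h1, h2, rfl⟩))
  simp only [map_mul, map_inv] at hrel
  exact mul_inv_eq_one.mp hrel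

theorem band_succ_self (t : ℕ) : band n (t+1) t = σb n t := by
  simp [band, chain]

theorem descCycle_eq_prod (p q : ℕ) :
    descCycle n p q = ((List.range' q (p - q)).reverse.map (σb n)).prod := by
  simp only [descCycle, band_succ_self]

theorem descCycle_succ {p q : ℕ} (hqp : q ≤ p) :
    descCycle n (p+1) q = σb n p * descCycle n p q := by
  rw [descCycle_eq_prod, descCycle_eq_prod, Nat.sub_add_comm hqp, List.range'_concat]
  simp [Nat.add_sub_cancel' hqp]

theorem commute_σb_descCycle {b p q : ℕ} (hpb : p + 1 ≤ b) :
    Commute (σb n b) (descCycle n p q) := by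
  rw [descCycle_eq_prod]
  refine Commute.list_prod_right _ _ fun x hx => ?_
  obtain ⟨t, ht, rfl⟩ := List.mem_map.mp hx
  rw [List.mem_reverse, List.mem_range'_1] at ht
  exact (commute_σb (by omega)).symm

theorem semiconjBy_descCycle_σb {p q m : ℕ} (hm : 1 ≤ m) (hqm : q ≤ m) (hmp : m + 2 ≤ p)
    (hpn : p ≤ n) : SemiconjBy (descCycle n p q) (σb n (m+1)) (σb n m) := by
  induction p, hmp using Nat.le_induction with
  | base =>
    have hδ : descCycle n (m+2) q = (σb n (m+1) * σb n m) * descCycle n m q := by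
      rw [descCycle_succ (by omega), descCycle_succ hqm, mul_assoc]
    have hbraid : SemiconjBy (σb n (m+1) * σb n m) (σb n (m+1)) (σb n m) := by
      simpa only [SemiconjBy, mul_assoc] using (σb_braid hm hpn).symm
    rw [hδ]
    exact hbraid.mul_left (commute_σb_descCycle le_rfl).symm
  | succ p hmp ih =>
    rw [descCycle_succ (by omega)]
    exact SemiconjBy.mul_left (commute_σb hmp).symm (ih (by omega))

theorem semiconjBy_descCycle_chain {p q i j : ℕ} (hqj : q ≤ j + 1) (hip : i < p)
    (hpn : p ≤ n) : SemiconjBy (descCycle n p q) (chain n (i+1) (j+1)) (chain n i j) := by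
  have hlist : chain n (i+1) (j+1) =
      ((List.range' (j+1) (i-1-j)).reverse.map fun t => σb n (t+1)).prod := by
    rw [chain, show i + 1 - 1 - (j + 1) = i - 1 - j by omega, List.range'_succ_left,
      List.map_reverse, List.map_reverse, List.map_map]
    rfl
  rw [hlist, chain]
  refine SemiconjBy.list_prod_map _ fun t ht => ?_
  rw [List.mem_reverse, List.mem_range'_1] at ht
  exact semiconjBy_descCycle_σb (by omega) (by omega) (by omega) hpn

end BraidGroup

open BraidGroup in
/-- for `h > i > j > k`, `(i,j) δ_{h,k} = δ_{h,k} (i+1,j+1)` in `B_n`. -/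
theorem band_descCycle (n h i j k : ℕ)
    (hk : 1 ≤ k) (hkj : k < j) (hji : j < i) (hih : i < h) (hhn : h ≤ n) :
    band n i j * descCycle n h k = descCycle n h k * band n (i + 1) (j + 1) := by
  have hσ := semiconjBy_descCycle_σb (m := j) (by omega) hkj.le (by omega) hhn
  have hchain := semiconjBy_descCycle_chain (Nat.le_succ_of_le hkj.le) hih hhn
  exact ((hchain.mul_right hσ).mul_right hchain.inv_right).eq.symm
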